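/- For a simplicial module M, the operator φ_n = Σ_{i=0}^n (-1)^i s_{n,i} p_{n,i} : M_n → M_{n+1} satisfies b_{n+1} φ_n + φ_{n-1} b_n = p_n − 1, where b is the simplicial differential, p_{n,i} = (1 − s_{n-1,i}∂_{n,i+1})···(1 − s_{n-1,n-1}∂_{n,n}), and p_n = p_{n,0}. -/

import Mathlib

open CategoryTheory

universe v u

/-- A simplicial module in a pre-additive category `C`: objects `M n` together with
face maps `δ n i : M (n+1) ⟶ M n` (representing `∂_{n+1,i}`, meaningful for `0 ≤ i ≤ n+1`)
and degeneracy maps `σ n i : M n ⟶ M (n+1)` (representing `s_{n,i}`, meaningful for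
`0 ≤ i ≤ n`), satisfying the standard simplicial identities.
Here `f ≫ g` denotes "first apply `f`, then `g`". -/
structure SimpMod (C : Type u) [Category.{v} C] [Preadditive C] where
  M : ℕ → C
  δ : ∀ n : ℕ, ℕ → (M (n + 1) ⟶ M n)
  σ : ∀ n : ℕ, ℕ → (M n ⟶ M (n + 1))
  /-- `∂_{n+1,k} ∂_{n+2,j} = ∂_{n+1,j} ∂_{n+2,k+1}` for `j ≤ k ≤ n+1`. -/
  δδ : ∀ n j k, j ≤ k → k ≤ n + 1 →
    δ (n + 1) j ≫ δ n k = δ (n + 1) (k + 1) ≫ δ n j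
  /-- `∂_{n+2,j} s_{n+1,k+1} = s_{n,k} ∂_{n+1,j}` for `j ≤ k ≤ n`. -/
  δσ_lt : ∀ n j k, j ≤ k → k ≤ n →
    σ (n + 1) (k + 1) ≫ δ (n + 1) j = δ n j ≫ σ n k
  /-- `∂_{n+1,j} s_{n,j} = 1` for `j ≤ n`. -/
  δσ_self : ∀ n j, j ≤ n → σ n j ≫ δ n j = 𝟙 (M n)
  /-- `∂_{n+1,j+1} s_{n,j} = 1` for `j ≤ n`. -/
  δσ_succ : ∀ n j, j ≤ n → σ n j ≫ δ n (j + 1) = 𝟙 (M n)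
  /-- `∂_{n+2,j+1} s_{n+1,k} = s_{n,k} ∂_{n+1,j}` for `k < j ≤ n+1`. -/
  δσ_gt : ∀ n j k, k < j → j ≤ n + 1 →
    σ (n + 1) k ≫ δ (n + 1) (j + 1) = δ n j ≫ σ n k
  /-- `s_{n+1,j} s_{n,k} = s_{n+1,k+1} s_{n,j}` for `j ≤ k ≤ n`. -/
  σσ : ∀ n j k, j ≤ k → k ≤ n →
    σ n k ≫ σ (n + 1) j = σ n j ≫ σ (n + 1) (k + 1)

namespace SimpMod

variable {C : Type u} [Category.{v} C] [Preadditive C] (X : SimpMod C)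

/-- The simplicial differential `b_{n+1} = ∑_{i=0}^{n+1} (-1)^i ∂_{n+1,i} : M_{n+1} → M_n`. -/
def b (n : ℕ) : X.M (n + 1) ⟶ X.M n :=
  ∑ i ∈ Finset.range (n + 2), ((-1 : ℤ) ^ i) • X.δ n i

/-- `pAux n k` is the product `(1 - s_{n,n-k+1}∂_{n+1,n-k+2})⋯(1 - s_{n,n}∂_{n+1,n+1})`
of the last `k` Dold–Puppe factors on `M_{n+1}`; thus `pAux n (n+1-i)` is the
Dold–Puppe operator `p_{n+1,i}` (for `i ≤ n+1`), the rightmost factor being applied first. -/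
def pAux (n : ℕ) : ℕ → (X.M (n + 1) ⟶ X.M (n + 1))
  | 0 => 𝟙 (X.M (n + 1))
  | k + 1 => pAux n k ≫ (𝟙 (X.M (n + 1)) - X.δ n (n - k + 1) ≫ X.σ n (n - k))

/-- The Dold–Puppe idempotent `p_n = (1 - s_{n-1,0}∂_{n,1})⋯(1 - s_{n-1,n-1}∂_{n,n}) : M_n → M_n`. -/
def p : ∀ n : ℕ, X.M n ⟶ X.M n
  | 0 => 𝟙 (X.M 0)
  | n + 1 => X.pAux n (n + 1)

end SimpMod

/-- Epstein's homotopy `φ_n = ∑_{i=0}^n (-1)^i s_{n,i} p_{n,i} : M_n → M_{n+1}`. -/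
def SimpMod.φ {C : Type u} [Category.{v} C] [Preadditive C] (X : SimpMod C) :
    ∀ n : ℕ, X.M n ⟶ X.M (n + 1)
  | 0 => X.σ 0 0
  | n + 1 => ∑ i ∈ Finset.range (n + 2),
      ((-1 : ℤ) ^ i) • (X.pAux n (n + 1 - i) ≫ X.σ (n + 1) i)

/-!
The faces `∂_j` with `j > i` annihilate `p_{n,i}` and those with `j < i` commute with it, so with
`b_{≥a} = ∑_{j ≥ a} (-1)^j ∂_j` the composite `p_{n,i} ≫ b_{≥i}` is `± p_{n,i} ≫ ∂_i`. The key
identity is `p_{n+1,i+1} ≫ b_{≥i+1} = b_{≥i+1} ≫ p_{n,i}`, proved by downward induction on `i`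
inside an induction on `n`, using `b_{≥a} ≫ b_{≥a} = 0`. With it, the `i`-th summands of `φ b` and
`b φ` add up to `p_{n+1,i} - p_{n+1,i+1}`, and the sum over `i` telescopes to `p_{n+1} - 1`.
-/

namespace SimpMod

open Finset Preadditive Limits

variable {C : Type u} [Category.{v} C] [Preadditive C] (X : SimpMod C)

def pFactor (n i : ℕ) : X.M (n + 1) ⟶ X.M (n + 1) :=
  𝟙 _ - X.δ n (i + 1) ≫ X.σ n i

/-- The Dold–Puppe operator `p_{n+1,i}` on `M_{n+1}`. -/
def pTail (n i : ℕ) : X.M (n + 1) ⟶ X.M (n + 1) :=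
  X.pAux n (n + 1 - i)

def bHead (n a : ℕ) : X.M (n + 1) ⟶ X.M n :=
  ∑ j ∈ range a, ((-1 : ℤ) ^ j) • X.δ n j

def bTail (n a : ℕ) : X.M (n + 1) ⟶ X.M n :=
  ∑ j ∈ Ico a (n + 2), ((-1 : ℤ) ^ j) • X.δ n j

lemma pTail_zero (n : ℕ) : X.pTail n 0 = X.p (n + 1) := rfl

lemma pTail_self (n : ℕ) : X.pTail n (n + 1) = 𝟙 _ := by
  simp [pTail, pAux]

lemma pTail_eq_pTail_succ_comp {n i : ℕ} (hi : i ≤ n) :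
    X.pTail n i = X.pTail n (i + 1) ≫ X.pFactor n i := by
  rw [pTail, pTail, show n + 1 - i = n - i + 1 by omega, pAux, pFactor,
    show n - (n - i) = i by omega, show n + 1 - (i + 1) = n - i by omega]

lemma pFactor_comp_δ_succ {n i : ℕ} (hi : i ≤ n) : X.pFactor n i ≫ X.δ n (i + 1) = 0 := by
  simp [pFactor, X.δσ_succ n i hi]

lemma pFactor_comp_δ_self {n i : ℕ} (hi : i ≤ n) :
    X.pFactor n i ≫ X.δ n i = X.δ n i - X.δ n (i + 1) := by
  simp [pFactor, X.δσ_self n i hi]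

lemma pFactor_succ_comp_δ_of_le {n i j : ℕ} (hj : j ≤ i) (hi : i ≤ n) :
    X.pFactor (n + 1) (i + 1) ≫ X.δ (n + 1) j = X.δ (n + 1) j ≫ X.pFactor n i := by
  simp only [pFactor, sub_comp, comp_sub, Category.id_comp, Category.comp_id, Category.assoc,
    X.δσ_lt n j i hj hi]
  rw [← Category.assoc, ← X.δδ n j (i + 1) (by omega) (by omega), Category.assoc]

lemma pFactor_comp_δ_of_lt {n i j : ℕ} (hij : i < j) (hj : j ≤ n + 1) :
    X.pFactor (n + 1) i ≫ X.δ (n + 1) (j + 1) = X.δ (n + 1) (j + 1) ≫ X.pFactor n i := by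
  simp only [pFactor, sub_comp, comp_sub, Category.id_comp, Category.comp_id, Category.assoc,
    X.δσ_gt n j i hij hj]
  rw [← Category.assoc, X.δδ n (i + 1) j hij hj, Category.assoc]

lemma pTail_comp_δ_eq_zero {n i j : ℕ} (hij : i < j) (hj : j ≤ n + 1) :
    X.pTail n i ≫ X.δ n j = 0 := by
  obtain ⟨k, rfl⟩ : ∃ k, j = k + 1 := ⟨j - 1, by omega⟩
  induction Nat.le_of_lt_succ hij using Nat.decreasingInduction with
  | self =>
    rw [X.pTail_eq_pTail_succ_comp (by omega), Category.assoc,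
      X.pFactor_comp_δ_succ (by omega), comp_zero]
  | of_succ i hik ih =>
    obtain ⟨m, rfl⟩ : ∃ m, n = m + 1 := ⟨n - 1, by omega⟩
    rw [X.pTail_eq_pTail_succ_comp (by omega), Category.assoc,
      X.pFactor_comp_δ_of_lt hik (by omega), ← Category.assoc, ih (by omega), zero_comp]

lemma pTail_succ_comp_δ {n i j : ℕ} (hj : j ≤ i) (hi : i ≤ n + 1) :
    X.pTail (n + 1) (i + 1) ≫ X.δ (n + 1) j = X.δ (n + 1) j ≫ X.pTail n i := by
  induction hi using Nat.decreasingInduction with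
  | self => simp [pTail_self]
  | of_succ i hi ih =>
    rw [X.pTail_eq_pTail_succ_comp (show i + 1 ≤ n + 1 by omega), Category.assoc,
      X.pFactor_succ_comp_δ_of_le hj (by omega), ← Category.assoc, ih (by omega),
      Category.assoc, ← X.pTail_eq_pTail_succ_comp (by omega)]

lemma bHead_add_bTail {n a : ℕ} (ha : a ≤ n + 2) : X.bHead n a + X.bTail n a = X.b n :=
  sum_range_add_sum_Ico _ ha

lemma bTail_zero (n : ℕ) : X.bTail n 0 = X.b n := by
  rw [bTail, b, range_eq_Ico]

lemma bTail_eq_add {n a : ℕ} (ha : a ≤ n + 1) :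
    X.bTail n a = ((-1 : ℤ) ^ a) • X.δ n a + X.bTail n (a + 1) :=
  sum_eq_sum_Ico_succ_bot (by omega) _

lemma bTail_eq_zero {n a : ℕ} (ha : n + 2 ≤ a) : X.bTail n a = 0 := by
  rw [bTail, Ico_eq_empty (by omega), sum_empty]

lemma bTail_succ (n a : ℕ) :
    X.bTail (n + 1) (a + 1) = -∑ t ∈ Ico a (n + 2), ((-1 : ℤ) ^ t) • X.δ (n + 1) (t + 1) := by
  rw [bTail, show n + 1 + 2 = n + 2 + 1 by omega, ← sum_Ico_add', ← sum_neg_distrib]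
  refine sum_congr rfl fun t _ => ?_
  rw [pow_succ, mul_neg_one, neg_smul]

lemma δ_comp_bTail (n a : ℕ) :
    X.δ (n + 1) a ≫ X.bTail n (a + 1) = -(X.bTail (n + 1) (a + 2) ≫ X.δ n a) := by
  rw [bTail_succ, neg_comp, neg_neg, bTail, comp_sum, Preadditive.sum_comp]
  refine sum_congr rfl fun t ht => ?_
  rw [mem_Ico] at ht
  rw [comp_zsmul, zsmul_comp, X.δδ n a t (by omega) (by omega)]

lemma bTail_comp_bTail (n a : ℕ) : X.bTail (n + 1) a ≫ X.bTail n a = 0 := by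
  rcases lt_or_ge (n + 2) a with ha | ha
  · rw [X.bTail_eq_zero (n := n) (by omega), comp_zero]
  induction ha using Nat.decreasingInduction with
  | self => rw [X.bTail_eq_zero (n := n) le_rfl, comp_zero]
  | of_succ a ha ih =>
    have hnext : X.bTail (n + 1) (a + 1) ≫ X.δ n a
        = ((-1 : ℤ) ^ (a + 1)) • (X.δ (n + 1) (a + 1) ≫ X.δ n a)
          + X.bTail (n + 1) (a + 2) ≫ X.δ n a := by
      rw [X.bTail_eq_add (by omega), add_comp, zsmul_comp]
    rw [X.bTail_eq_add (n := n + 1) (by omega), X.bTail_eq_add (n := n) (by omega)]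
    simp only [add_comp, comp_add, zsmul_comp, comp_zsmul, X.δ_comp_bTail, hnext, ih,
      X.δδ n a a le_rfl (by omega), smul_smul, ← pow_add, smul_add, smul_neg]
    rw [(Even.add_self a).neg_one_pow, Odd.neg_one_pow ⟨a, by ring⟩, one_smul, neg_one_smul]
    abel

lemma σ_comp_bTail {n i : ℕ} (hi : i ≤ n + 1) :
    X.σ (n + 1) i ≫ X.bTail (n + 1) i = -(X.bTail n (i + 1) ≫ X.σ n i) := by
  rw [X.bTail_eq_add (by omega), X.bTail_eq_add (by omega), bTail_succ, bTail]
  simp only [comp_add, comp_zsmul, comp_neg, comp_sum, X.δσ_self (n + 1) i hi,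
    X.δσ_succ (n + 1) i hi, pow_succ, mul_neg_one, neg_smul, add_neg_cancel_left,
    Preadditive.sum_comp, zsmul_comp, ← sum_neg_distrib]
  refine sum_congr rfl fun t ht => ?_
  rw [mem_Ico] at ht
  rw [X.δσ_gt n t i (by omega) (by omega)]

lemma σ_succ_comp_bHead {n i : ℕ} (hi : i ≤ n) :
    X.σ (n + 1) (i + 1) ≫ X.bHead (n + 1) (i + 1) = X.bHead n (i + 1) ≫ X.σ n i := by
  rw [bHead, bHead, comp_sum, Preadditive.sum_comp]
  refine sum_congr rfl fun l hl => ?_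
  rw [comp_zsmul, zsmul_comp, X.δσ_lt n l i (by simpa [Nat.lt_succ_iff] using hl) hi]

lemma σ_succ_comp_b {n i : ℕ} (hi : i ≤ n) :
    X.σ (n + 1) (i + 1) ≫ X.b (n + 1)
      = X.bHead n (i + 1) ≫ X.σ n i - X.bTail n (i + 2) ≫ X.σ n (i + 1) := by
  rw [← X.bHead_add_bTail (n := n + 1) (a := i + 1) (by omega), comp_add,
    X.σ_succ_comp_bHead hi, X.σ_comp_bTail (by omega), sub_eq_add_neg]

lemma pTail_comp_bTail_eq_zero {n i a : ℕ} (hia : i < a) : X.pTail n i ≫ X.bTail n a = 0 := by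
  rw [bTail, comp_sum]
  refine sum_eq_zero fun j hj => ?_
  rw [mem_Ico] at hj
  rw [comp_zsmul, X.pTail_comp_δ_eq_zero (by omega) (by omega), smul_zero]

lemma pTail_comp_bTail_self {n i : ℕ} (hi : i ≤ n + 1) :
    X.pTail n i ≫ X.bTail n i = ((-1 : ℤ) ^ i) • (X.pTail n i ≫ X.δ n i) := by
  rw [X.bTail_eq_add hi, comp_add, X.pTail_comp_bTail_eq_zero (Nat.lt_succ_self i), add_zero,
    comp_zsmul]

lemma pTail_succ_comp_bHead {n i : ℕ} (hi : i ≤ n + 1) :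
    X.pTail (n + 1) (i + 1) ≫ X.bHead (n + 1) (i + 1) = X.bHead (n + 1) (i + 1) ≫ X.pTail n i := by
  rw [bHead, comp_sum, Preadditive.sum_comp]
  refine sum_congr rfl fun j hj => ?_
  rw [comp_zsmul, zsmul_comp, X.pTail_succ_comp_δ (by simpa [Nat.lt_succ_iff] using hj) hi]

lemma pTail_comp_δ_self {n i : ℕ} (hi : i ≤ n + 1) :
    X.pTail n i ≫ X.δ n i = ((-1 : ℤ) ^ i) • (X.pTail n i ≫ X.bTail n i) := by
  rw [X.pTail_comp_bTail_self hi, smul_smul, ← pow_add, (Even.add_self i).neg_one_pow, one_smul]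

lemma pTail_comp_bTail_comm_step {n k : ℕ} (hk : k ≤ n)
    (hnext : X.pTail (n + 1) (k + 2) ≫ X.bTail (n + 1) (k + 2)
      = X.bTail (n + 1) (k + 2) ≫ X.pTail n (k + 1))
    (hvanish : X.bTail (n + 1) (k + 1) ≫ X.pTail n (k + 1) ≫ X.bTail n (k + 1) = 0) :
    X.pTail (n + 1) (k + 1) ≫ X.bTail (n + 1) (k + 1) = X.bTail (n + 1) (k + 1) ≫ X.pTail n k := by
  have hδ : X.pTail (n + 1) (k + 1) ≫ X.δ (n + 1) (k + 1)
      = X.δ (n + 1) (k + 1) ≫ X.pTail n (k + 1)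
        - X.pTail (n + 1) (k + 2) ≫ X.δ (n + 1) (k + 2) := by
    rw [X.pTail_eq_pTail_succ_comp (by omega), Category.assoc, X.pFactor_comp_δ_self (by omega),
      comp_sub, X.pTail_succ_comp_δ le_rfl (by omega)]
  have hkill : X.bTail (n + 1) (k + 1) ≫ X.pTail n (k + 1) ≫ X.δ n (k + 1) = 0 := by
    rw [X.pTail_comp_δ_self (by omega), comp_zsmul, hvanish, smul_zero]
  calc X.pTail (n + 1) (k + 1) ≫ X.bTail (n + 1) (k + 1)
      = ((-1 : ℤ) ^ (k + 1)) • (X.δ (n + 1) (k + 1) ≫ X.pTail n (k + 1))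
        + X.pTail (n + 1) (k + 2) ≫ X.bTail (n + 1) (k + 2) := by
        rw [X.pTail_comp_bTail_self (by omega), hδ, X.pTail_comp_bTail_self (by omega), smul_sub,
          pow_succ (-1 : ℤ) (k + 1), mul_neg_one, neg_smul, sub_eq_add_neg]
    _ = X.bTail (n + 1) (k + 1) ≫ X.pTail n (k + 1) := by
        rw [hnext, X.bTail_eq_add (n := n + 1) (a := k + 1) (by omega), add_comp, zsmul_comp]
    _ = X.bTail (n + 1) (k + 1) ≫ X.pTail n k := by
        rw [X.pTail_eq_pTail_succ_comp hk, pFactor, comp_sub, Category.comp_id, comp_sub,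
          reassoc_of% hkill, zero_comp, sub_zero]

lemma pTail_comp_bTail_comm_of_comp_eq_zero {n : ℕ}
    (hvanish : ∀ k ≤ n, X.bTail (n + 1) (k + 1) ≫ X.pTail n (k + 1) ≫ X.bTail n (k + 1) = 0)
    {k : ℕ} (hk : k ≤ n + 1) :
    X.pTail (n + 1) (k + 1) ≫ X.bTail (n + 1) (k + 1) = X.bTail (n + 1) (k + 1) ≫ X.pTail n k := by
  induction hk using Nat.decreasingInduction with
  | self => rw [pTail_self, pTail_self, Category.id_comp, Category.comp_id]
  | of_succ k hk ih => exact X.pTail_comp_bTail_comm_step (by omega) ih (hvanish k (by omega))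

lemma pTail_comp_bTail_comm {n k : ℕ} (hk : k ≤ n + 1) :
    X.pTail (n + 1) (k + 1) ≫ X.bTail (n + 1) (k + 1) = X.bTail (n + 1) (k + 1) ≫ X.pTail n k := by
  induction n generalizing k with
  | zero =>
    refine X.pTail_comp_bTail_comm_of_comp_eq_zero (fun k hk => ?_) hk
    obtain rfl : k = 0 := by omega
    rw [pTail_self, Category.id_comp, bTail_comp_bTail]
  | succ m ih =>
    refine X.pTail_comp_bTail_comm_of_comp_eq_zero (fun k hk => ?_) hk
    rw [ih (by omega), reassoc_of% (X.bTail_comp_bTail (m + 1) (k + 1)), zero_comp]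

lemma pTail_zero_comp_σ_comp_b (n : ℕ) : X.pTail n 0 ≫ X.σ (n + 1) 0 ≫ X.b (n + 1) = 0 := by
  rw [← bTail_zero, X.σ_comp_bTail (by omega), comp_neg, ← Category.assoc,
    X.pTail_comp_bTail_eq_zero (a := 0 + 1) (by omega), zero_comp, neg_zero]

lemma pTail_succ_comp_σ_comp_b {n i : ℕ} (hi : i ≤ n + 1) :
    X.pTail (n + 1) (i + 1) ≫ X.σ (n + 2) (i + 1) ≫ X.b (n + 2)
      = X.bHead (n + 1) (i + 1) ≫ X.pTail n i ≫ X.σ (n + 1) i := by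
  rw [X.σ_succ_comp_b hi, comp_sub, ← Category.assoc, X.pTail_succ_comp_bHead hi,
    ← Category.assoc, X.pTail_comp_bTail_eq_zero (by omega), zero_comp, sub_zero,
    Category.assoc]

lemma summand_comp_b_add_b_comp_summand {n k : ℕ} (hk : k ≤ n + 1) :
    ((-1 : ℤ) ^ (k + 1)) • (X.pTail (n + 1) (k + 1) ≫ X.σ (n + 2) (k + 1) ≫ X.b (n + 2))
      + ((-1 : ℤ) ^ k) • (X.b (n + 1) ≫ X.pTail n k ≫ X.σ (n + 1) k)
      = X.pTail (n + 1) k - X.pTail (n + 1) (k + 1) := by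
  calc _ = ((-1 : ℤ) ^ k) • (X.bTail (n + 1) (k + 1) ≫ X.pTail n k ≫ X.σ (n + 1) k) := by
        rw [X.pTail_succ_comp_σ_comp_b hk, ← X.bHead_add_bTail (n := n + 1) (a := k + 1) (by omega),
          add_comp, smul_add, pow_succ, mul_neg_one, neg_smul]
        abel
    _ = ((-1 : ℤ) ^ k * (-1) ^ (k + 1)) •
          (X.pTail (n + 1) (k + 1) ≫ X.δ (n + 1) (k + 1) ≫ X.σ (n + 1) k) := by
        rw [← Category.assoc, ← X.pTail_comp_bTail_comm hk, X.pTail_comp_bTail_self (by omega),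
          zsmul_comp, smul_smul, Category.assoc]
    _ = _ := by
        rw [← pow_add, Odd.neg_one_pow ⟨k, by ring⟩, neg_one_smul,
          X.pTail_eq_pTail_succ_comp (n := n + 1) hk, pFactor, comp_sub, Category.comp_id]
        abel

lemma φ_comp_b_add_b_comp_φ_succ_succ (n : ℕ) :
    X.φ (n + 2) ≫ X.b (n + 2) + X.b (n + 1) ≫ X.φ (n + 1) = X.p (n + 2) - 𝟙 (X.M (n + 2)) := by
  have hφ : X.φ (n + 2)
      = ∑ i ∈ range (n + 3), ((-1 : ℤ) ^ i) • (X.pTail (n + 1) i ≫ X.σ (n + 2) i) := rfl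
  have hφ' : X.φ (n + 1)
      = ∑ k ∈ range (n + 2), ((-1 : ℤ) ^ k) • (X.pTail n k ≫ X.σ (n + 1) k) := rfl
  calc _ = ∑ k ∈ range (n + 2), (X.pTail (n + 1) k - X.pTail (n + 1) (k + 1)) := by
        rw [hφ, hφ', Preadditive.sum_comp, comp_sum, sum_range_succ']
        simp only [zsmul_comp, comp_zsmul, Category.assoc, pTail_zero_comp_σ_comp_b, smul_zero,
          add_zero]
        rw [← sum_add_distrib]
        exact sum_congr rfl fun k hk =>
          X.summand_comp_b_add_b_comp_summand (by simpa [Nat.lt_succ_iff] using hk)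
    _ = _ := by rw [sum_range_sub', pTail_zero, pTail_self]

lemma φ_comp_b_add_b_comp_φ_one :
    X.φ 1 ≫ X.b 1 + X.b 0 ≫ X.φ 0 = X.p 1 - 𝟙 (X.M 1) := by
  have hφ : X.φ 1 = X.pTail 0 0 ≫ X.σ 1 0 - X.pTail 0 1 ≫ X.σ 1 1 := by
    simp [φ, sum_range_succ, pTail, sub_eq_add_neg]
  calc _ = -(X.bHead 0 1 ≫ X.σ 0 0) + (X.bHead 0 1 + X.bTail 0 1) ≫ X.σ 0 0 := by
        rw [hφ, X.bHead_add_bTail (by omega), sub_comp, Category.assoc, Category.assoc,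
          pTail_zero_comp_σ_comp_b, pTail_self, Category.id_comp, X.σ_succ_comp_b le_rfl,
          X.bTail_eq_zero le_rfl, zero_comp, sub_zero, zero_sub]
        rfl
    _ = X.bTail 0 1 ≫ X.σ 0 0 := by rw [add_comp, neg_add_cancel_left]
    _ = _ := by
        rw [X.bTail_eq_add le_rfl, X.bTail_eq_zero le_rfl, add_zero, ← pTail_zero,
          X.pTail_eq_pTail_succ_comp le_rfl, pTail_self, Category.id_comp, pFactor, pow_one,
          neg_one_smul, neg_comp, sub_sub_cancel_left]

lemma φ_zero_comp_b : X.φ 0 ≫ X.b 0 = X.p 0 - 𝟙 (X.M 0) := by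
  simp [φ, b, p, sum_range_succ, X.δσ_self 0 0 le_rfl, X.δσ_succ 0 0 le_rfl]

end SimpMod

/-- For a simplicial module `M`, the operator
`φ_n = ∑_{i=0}^n (-1)^i s_{n,i} p_{n,i}` satisfies `b_{n+1} φ_n + φ_{n-1} b_n = p_n − 1`.
(First clause: degree `n+1`; second clause: degree `0`, where the `φ_{-1} b_0` term is absent.) -/
theorem epstein_homotopy {C : Type u} [Category.{v} C] [Preadditive C]
    (X : SimpMod C) :
    (∀ n : ℕ, X.φ (n + 1) ≫ X.b (n + 1) + X.b n ≫ X.φ n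
        = X.p (n + 1) - 𝟙 (X.M (n + 1))) ∧
    (X.φ 0 ≫ X.b 0 = X.p 0 - 𝟙 (X.M 0)) := by
  refine ⟨fun n => ?_, X.φ_zero_comp_b⟩
  cases n with
  | zero => exact X.φ_comp_b_add_b_comp_φ_one
  | succ n => exact X.φ_comp_b_add_b_comp_φ_succ_succ n
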